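/- For every positive integer k, cφ_k(2) = 2k² + (k choose 2)², which equals k²(k²-2k+9)/4. -/

import Mathlib

/-! Multiplying the generating function by the Euler product, `c(0), c(1), c(2)` are determined
by the first three theta coefficients and by `∏ₙ (1 - qⁿ)ᵏ ≡ 1 - k q + (C(k,2) - k) q² mod q³`.
Completing `m ∈ ℤ^{k-1}` by `m_k = -(m₁ + ⋯ + m_{k-1})` turns `2 Q(m)` into the sum of squares of a
zero-sum vector of `ℤᵏ`. For such a vector `mᵢ² + |mᵢ| ≤ ∑ m_j²`, so when `Q = n ≤ 2` all entries
lie in `{-1, 0, 1}` and the vector is determined by the two disjoint `n`-sets where it equals `1`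
and `-1`; hence `θ(n) = C(k,n) C(k-n,n)`. -/

open Finset PowerSeries

/-- The quadratic form `Q(m₁,…,m_r) = ∑ mᵢ² + ∑_{i<j} mᵢ mⱼ`. -/
def frobQ {r : ℕ} (v : Fin r → ℤ) : ℤ :=
  (∑ i, v i ^ 2) + ∑ i, ∑ j ∈ Finset.Ioi i, v i * v j

/-- The `n`-th coefficient of the theta series `∑_{m₁,…,m_{k-1} ∈ ℤ} q^{Q(m₁,…,m_{k-1})}`,
i.e. the number of integer vectors of length `k-1` on which `Q` takes the value `n`. -/
noncomputable def frobThetaCoeff (k n : ℕ) : ℕ :=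
  Nat.card {v : Fin (k - 1) → ℤ // frobQ v = (n : ℤ)}

/-- `c : ℕ → ℤ` is the coefficient sequence of the `k`-colored generalized Frobenius
partition generating function, i.e. `∑ c(n) qⁿ = (∑_{m ∈ ℤ^{k-1}} q^{Q(m)}) / ∏_{n≥1}(1-qⁿ)^k`
as formal power series: multiplying by a sufficiently long truncation of `∏ (1-qⁿ)^k`
recovers each theta coefficient. -/
def IsCphi (k : ℕ) (c : ℕ → ℤ) : Prop :=
  ∀ n : ℕ,
    (PowerSeries.coeff n)
        ((PowerSeries.mk fun m => c m) *
          ∏ i ∈ Finset.range (n + 1), (1 - (PowerSeries.X : PowerSeries ℤ) ^ (i + 1)) ^ k) =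
      frobThetaCoeff k n

noncomputable def eulerProdTrunc (R : Type*) [CommRing R] (k N : ℕ) : R⟦X⟧ :=
  ∏ i ∈ range N, (1 - X ^ (i + 1)) ^ k

section EulerProduct

variable {R : Type*} [CommRing R]

lemma coeff_mul_eq_of_X_pow_dvd_sub {n : ℕ} {ψ ψ' : R⟦X⟧} (h : X ^ (n + 1) ∣ ψ - ψ')
    (φ : R⟦X⟧) : coeff n (φ * ψ) = coeff n (φ * ψ') := by
  rw [← sub_eq_zero, ← map_sub, ← mul_sub]
  exact X_pow_dvd_iff.mp (dvd_mul_of_dvd_right h φ) n n.lt_succ_self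

lemma dvd_prod_sub_one {ι : Type*} {a : R} {s : Finset ι} {f : ι → R}
    (h : ∀ i ∈ s, a ∣ f i - 1) : a ∣ ∏ i ∈ s, f i - 1 :=
  Finset.prod_induction f (fun x => a ∣ x - 1)
    (fun x y hx hy => by
      have : x * y - 1 = x * (y - 1) + (x - 1) := by ring
      rw [this]; exact dvd_add (dvd_mul_of_dvd_right hy x) hx)
    (by simp) h

lemma X_pow_dvd_one_sub_X_pow_pow_sub_one (m k : ℕ) :
    (X : R⟦X⟧) ^ m ∣ (1 - X ^ m) ^ k - 1 := by
  simpa [one_pow] using sub_dvd_pow_sub_pow (1 - (X : R⟦X⟧) ^ m) 1 k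

lemma X_pow_succ_dvd_eulerProdTrunc_sub {k n N : ℕ} (h : n ≤ N) :
    (X : R⟦X⟧) ^ (n + 1) ∣ eulerProdTrunc R k N - eulerProdTrunc R k n := by
  rw [eulerProdTrunc, eulerProdTrunc, ← prod_range_mul_prod_Ico _ h, ← mul_sub_one]
  refine dvd_mul_of_dvd_right (dvd_prod_sub_one fun i hi => ?_) _
  exact (pow_dvd_pow X (Nat.succ_le_succ (mem_Ico.mp hi).1)).trans (X_pow_dvd_one_sub_X_pow_pow_sub_one _ _)

lemma eulerProdTrunc_two (k : ℕ) :
    eulerProdTrunc R k 2 = ((1 - X) * (1 - X ^ 2)) ^ k := by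
  simp [eulerProdTrunc, prod_range_succ, mul_pow]

lemma X_pow_three_dvd_eulerProdTrunc_two_sub (k : ℕ) :
    (X : R⟦X⟧) ^ 3 ∣
      eulerProdTrunc R k 2 - (1 - C (k : R) * X + C ((k.choose 2 : R) - k) * X ^ 2) := by
  rw [eulerProdTrunc_two, map_sub, map_natCast, map_natCast]
  induction k with
  | zero => simp
  | succ k ih =>
    obtain ⟨g, hg⟩ := ih
    refine ⟨g * ((1 - X) * (1 - X ^ 2) : R⟦X⟧) + (1 + 2 * k - k.choose 2
      - k.choose 2 * (X : R⟦X⟧) + (k.choose 2 - k) * (X : R⟦X⟧) ^ 2), ?_⟩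
    rw [pow_succ, Nat.choose_succ_succ', Nat.choose_one_right]
    push_cast
    linear_combination ((1 - X) * (1 - X ^ 2)) * hg

lemma coeff_mul_eulerProdTrunc {k n N : ℕ} (hn : n ≤ 2) (hN : n ≤ N) (φ : R⟦X⟧) :
    coeff n (φ * eulerProdTrunc R k N) =
      coeff n (φ * (1 - C (k : R) * X + C ((k.choose 2 : R) - k) * X ^ 2)) := by
  rw [coeff_mul_eq_of_X_pow_dvd_sub (X_pow_succ_dvd_eulerProdTrunc_sub hN),
    ← coeff_mul_eq_of_X_pow_dvd_sub (X_pow_succ_dvd_eulerProdTrunc_sub hn)]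
  exact coeff_mul_eq_of_X_pow_dvd_sub
    ((pow_dvd_pow X (by omega)).trans (X_pow_three_dvd_eulerProdTrunc_two_sub k)) φ

lemma coeff_mul_one_sub_C_mul_X_add_C_mul_X_sq (φ : R⟦X⟧) (a b : R) :
    coeff 0 (φ * (1 - C a * X + C b * X ^ 2)) = coeff 0 φ ∧
    coeff 1 (φ * (1 - C a * X + C b * X ^ 2)) = coeff 1 φ - a * coeff 0 φ ∧
    coeff 2 (φ * (1 - C a * X + C b * X ^ 2)) = coeff 2 φ - a * coeff 1 φ + b * coeff 0 φ := by
  simp only [mul_comm φ, sub_mul, add_mul, one_mul, mul_assoc, map_sub, map_add, coeff_C_mul,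
    coeff_succ_X_mul, coeff_X_pow_mul', coeff_zero_X_mul, coeff_zero_eq_constantCoeff]
  simp

end EulerProduct

lemma two_mul_frobQ {r : ℕ} (v : Fin r → ℤ) :
    2 * frobQ v = ∑ i, v i ^ 2 + (∑ i, v i) ^ 2 := by
  have hoff := sum_sum_Ioi_add_eq_sum_sum_off_diag fun i j => v i * v j
  have hsq : (∑ i, v i) ^ 2 = ∑ i, (v i ^ 2 + ∑ j ∈ {i}ᶜ, v j * v i) := by
    rw [sq, sum_mul_sum, sum_comm]
    refine sum_congr rfl fun i _ => ?_
    rw [← sum_add_sum_compl {i}, sum_singleton, sq]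
  rw [hsq, sum_add_distrib, ← hoff, frobQ]
  simp only [sum_add_distrib, mul_comm (v _) (v _)]
  ring

lemma last_eq_neg_sum_init {r : ℕ} {x : Fin (r + 1) → ℤ} (h : ∑ i, x i = 0) :
    x (Fin.last r) = -∑ i, Fin.init x i := by
  rw [Fin.sum_univ_castSucc] at h
  exact eq_neg_of_add_eq_zero_right h

lemma sum_sq_snoc_neg_sum {r : ℕ} (v : Fin r → ℤ) :
    ∑ i, (Fin.snoc v (-∑ j, v j) : Fin (r + 1) → ℤ) i ^ 2 = 2 * frobQ v := by
  simp [Fin.sum_univ_castSucc, two_mul_frobQ]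

def frobQLevelEquiv (r : ℕ) (n : ℤ) :
    {v : Fin r → ℤ // frobQ v = n} ≃
      {x : Fin (r + 1) → ℤ // ∑ i, x i = 0 ∧ ∑ i, x i ^ 2 = 2 * n} where
  toFun v := ⟨Fin.snoc v.1 (-∑ i, v.1 i), by simp [Fin.sum_univ_castSucc],
    by rw [sum_sq_snoc_neg_sum, v.2]⟩
  invFun x := ⟨Fin.init x.1, by
    have h := sum_sq_snoc_neg_sum (Fin.init x.1)
    rw [← last_eq_neg_sum_init x.2.1, Fin.snoc_init_self, x.2.2] at h
    omega⟩
  left_inv v := by simp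
  right_inv x := by
    ext1
    simp only
    rw [← last_eq_neg_sum_init x.2.1, Fin.snoc_init_self]

lemma sq_add_abs_le_sum_sq {ι : Type*} [Fintype ι] [DecidableEq ι] {x : ι → ℤ}
    (h : ∑ i, x i = 0) (i : ι) :
    x i ^ 2 + |x i| ≤ ∑ j, x j ^ 2 := by
  have hrest : ∑ j ∈ univ.erase i, x j = -x i := by
    linarith [add_sum_erase univ x (mem_univ i)]
  calc x i ^ 2 + |x i| = x i ^ 2 + |∑ j ∈ univ.erase i, x j| := by rw [hrest, abs_neg]
    _ ≤ x i ^ 2 + ∑ j ∈ univ.erase i, |x j| := by gcongr; exact abs_sum_le_sum_abs _ _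
    _ ≤ x i ^ 2 + ∑ j ∈ univ.erase i, x j ^ 2 := by
      gcongr with j
      rw [Int.abs_eq_natAbs]
      exact Int.natAbs_le_self_sq (x j)
    _ = ∑ j, x j ^ 2 := add_sum_erase _ (fun j => x j ^ 2) (mem_univ i)

lemma abs_le_one_of_sum_eq_zero {ι : Type*} [Fintype ι] [DecidableEq ι] {x : ι → ℤ}
    (h : ∑ i, x i = 0) (hsq : ∑ i, x i ^ 2 ≤ 4) (i : ι) : |x i| ≤ 1 := by
  nlinarith [sq_add_abs_le_sum_sq h i, sq_abs (x i), abs_nonneg (x i)]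

lemma sum_eq_card_sub_card_of_abs_le_one {ι : Type*} [Fintype ι] {x : ι → ℤ}
    (hx : ∀ i, |x i| ≤ 1) :
    ∑ i, x i = #{i | x i = 1} - #{i | x i = -1} ∧
      ∑ i, x i ^ 2 = #{i | x i = 1} + #{i | x i = -1} := by
  have hvals : ∀ i, x i = -1 ∨ x i = 0 ∨ x i = 1 := fun i => by
    have := abs_le.mp (hx i); omega
  simp only [natCast_card_filter, ← sum_sub_distrib, ← sum_add_distrib]
  constructor <;> refine sum_congr rfl fun i _ => ?_ <;> rcases hvals i with h | h | h <;> simp [h]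

section SignVectors

variable {ι : Type*} [DecidableEq ι]

def signVector (A B : Finset ι) (i : ι) : ℤ :=
  if i ∈ A then 1 else if i ∈ B then -1 else 0

lemma abs_signVector_le_one (A B : Finset ι) (i : ι) : |signVector A B i| ≤ 1 := by
  unfold signVector; split_ifs <;> simp

lemma filter_signVector_eq_one [Fintype ι] {A B : Finset ι} :
    ({i | signVector A B i = 1} : Finset ι) = A := by
  ext i; by_cases hA : i ∈ A <;> by_cases hB : i ∈ B <;> simp [signVector, hA, hB]

lemma filter_signVector_eq_neg_one [Fintype ι] {A B : Finset ι} (h : Disjoint A B) :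
    ({i | signVector A B i = -1} : Finset ι) = B := by
  ext i
  rw [mem_filter]
  by_cases hA : i ∈ A
  · simp [signVector, hA, disjoint_left.mp h hA]
  · simp [signVector, hA]

lemma signVector_filter [Fintype ι] {x : ι → ℤ} (hx : ∀ i, |x i| ≤ 1) :
    signVector {i | x i = 1} {i | x i = -1} = x := by
  funext i
  have := abs_le.mp (hx i)
  unfold signVector; split_ifs <;> simp_all; omega

end SignVectors

section DisjointPairs

variable {ι : Type*} [Fintype ι] [DecidableEq ι]

def zeroSumEquivDisjointPairs {n : ℕ} (hn : n ≤ 2) :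
    {x : ι → ℤ // ∑ i, x i = 0 ∧ ∑ i, x i ^ 2 = 2 * n} ≃
      {p : Finset ι × Finset ι // #p.1 = n ∧ #p.2 = n ∧ Disjoint p.1 p.2} where
  toFun x := ⟨(({i | x.1 i = 1} : Finset ι), ({i | x.1 i = -1} : Finset ι)), by
    have hx := abs_le_one_of_sum_eq_zero x.2.1 (by rw [x.2.2]; omega)
    have := sum_eq_card_sub_card_of_abs_le_one hx
    rw [x.2.1, x.2.2] at this
    dsimp only
    refine ⟨by omega, by omega, disjoint_filter.mpr fun i _ h => ?_⟩
    rw [h]; decide⟩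
  invFun p := ⟨signVector p.1.1 p.1.2, by
    have h := sum_eq_card_sub_card_of_abs_le_one (abs_signVector_le_one p.1.1 p.1.2)
    rw [filter_signVector_eq_one, filter_signVector_eq_neg_one p.2.2.2, p.2.1, p.2.2.1] at h
    omega⟩
  left_inv x := Subtype.ext (signVector_filter
    (abs_le_one_of_sum_eq_zero x.2.1 (by rw [x.2.2]; omega)))
  right_inv p := by
    ext1
    simp only [filter_signVector_eq_one, filter_signVector_eq_neg_one p.2.2.2]

lemma card_disjoint_pairs (a b : ℕ) :
    Nat.card {p : Finset ι × Finset ι // #p.1 = a ∧ #p.2 = b ∧ Disjoint p.1 p.2} =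
      (Fintype.card ι).choose a * (Fintype.card ι - a).choose b := by
  have hfiber : ∀ A ∈ powersetCard a (univ : Finset ι),
      #(powersetCard b Aᶜ) = (Fintype.card ι - a).choose b := fun A hA => by
    rw [card_powersetCard, card_compl, (mem_powersetCard.mp hA).2]
  rw [Nat.card_eq_fintype_card, Fintype.card_subtype, ← card_univ, ← card_powersetCard,
    card_univ, ← sum_const_nat hfiber, ← card_sigma]
  refine card_nbij' (fun p => ⟨p.1, p.2⟩) (fun s => (s.1, s.2)) ?_ ?_ (fun _ _ => rfl)
    (fun _ _ => rfl)
  all_goals intro _ h; simp_all [subset_compl_iff_disjoint_left]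

end DisjointPairs

lemma frobThetaCoeff_eq {k n : ℕ} (hk : 0 < k) (hn : n ≤ 2) :
    frobThetaCoeff k n = k.choose n * (k - n).choose n := by
  obtain ⟨r, rfl⟩ := Nat.exists_eq_add_one_of_ne_zero hk.ne'
  rw [frobThetaCoeff, Nat.add_sub_cancel, Nat.card_congr ((frobQLevelEquiv r n).trans
    (zeroSumEquivDisjointPairs hn)), card_disjoint_pairs, Fintype.card_fin]

lemma two_mul_cast_choose_two (k : ℕ) : 2 * (k.choose 2 : ℤ) = k ^ 2 - k := by
  have h : (k.choose 2 : ℚ) = k * (k - 1) / 2 := Nat.cast_choose_two ℚ k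
  have : (2 * (k.choose 2 : ℤ) : ℚ) = ((k ^ 2 - k : ℤ) : ℚ) := by push_cast; rw [h]; ring
  exact_mod_cast this

lemma cast_choose_two_mul_choose_sub_two (k : ℕ) :
    ((k.choose 2 * (k - 2).choose 2 : ℕ) : ℤ) =
      (k.choose 2 : ℤ) ^ 2 - (2 * k - 3) * k.choose 2 := by
  rcases Nat.lt_or_ge k 2 with hk | hk
  · interval_cases k <;> simp
  · obtain ⟨m, rfl⟩ := Nat.exists_eq_add_of_le' hk
    have hpascal : (m + 2).choose 2 = m.choose 2 + 2 * m + 1 := by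
      simp [Nat.choose_succ_succ']; ring
    rw [Nat.add_sub_cancel, hpascal]
    push_cast
    ring

/-- For every positive integer `k`, `cφ_k(2) = 2k² + (k choose 2)² = k²(k²-2k+9)/4`. -/
theorem cphi_value_at_two (k : ℕ) (hk : 0 < k) (c : ℕ → ℤ) (hc : IsCphi k c) :
    c 2 = 2 * (k : ℤ) ^ 2 + ((k.choose 2 : ℤ)) ^ 2 ∧
      4 * c 2 = (k : ℤ) ^ 2 * ((k : ℤ) ^ 2 - 2 * k + 9) := by
  have hθ : ∀ n ≤ 2, coeff n ((mk fun m => c m) *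
      (1 - C (k : ℤ) * X + C ((k.choose 2 : ℤ) - k) * X ^ 2)) =
      ((k.choose n * (k - n).choose n : ℕ) : ℤ) := fun n hn => by
    rw [← coeff_mul_eulerProdTrunc hn n.le_succ, ← frobThetaCoeff_eq hk hn]
    exact hc n
  obtain ⟨h0, h1, h2⟩ := coeff_mul_one_sub_C_mul_X_add_C_mul_X_sq (mk fun m => c m)
    (k : ℤ) ((k.choose 2 : ℤ) - k)
  rw [hθ 0 (by norm_num)] at h0
  rw [hθ 1 (by norm_num)] at h1
  rw [hθ 2 (by norm_num), cast_choose_two_mul_choose_sub_two] at h2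
  simp only [coeff_mk, Nat.choose_zero_right, Nat.choose_one_right, Nat.sub_zero, mul_one,
    Nat.cast_one, Nat.cast_mul, Nat.cast_pred hk] at h0 h1 h2
  have hC := two_mul_cast_choose_two k
  have hc2 : c 2 = 2 * (k : ℤ) ^ 2 + (k.choose 2 : ℤ) ^ 2 := by
    linear_combination -h2 - k * h1 + (k.choose 2 - k ^ 2 - k) * h0 - (k - 1) * hC
  exact ⟨hc2, by linear_combination 4 * hc2 + (2 * (k.choose 2 : ℤ) + k ^ 2 - k) * hC⟩
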